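/- Every bi-leveled tree c with at least one node decomposes uniquely as c = b\s where b is an indecomposable bi-leveled tree (its order ideal contains the rightmost node of the underlying tree) and s is a planar binary tree; this gives a bijection of graded sets M_+ ≅ B × Y, where M_+ is the set of nonempty bi-leveled trees, B the set of indecomposable bi-leveled trees, and Y the set of all planar binary trees (including the empty tree). -/

import Mathlib

/-- Planar binary trees. -/
inductive PBTree : Type
  | leaf : PBTree
  | node : PBTree → PBTree → PBTree
  deriving DecidableEq, Repr

namespace PBTree

instance : Inhabited PBTree := ⟨leaf⟩

/-- Number of internal nodes. -/
def size : PBTree → ℕ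
  | leaf => 0
  | node l r => l.size + r.size + 1

/-- Number of leaves. -/
def nleaves : PBTree → ℕ
  | leaf => 1
  | node l r => l.nleaves + r.nleaves

end PBTree

/-- Planar binary trees with `Bool`-labelled internal nodes; a label `true` means the
node belongs to the distinguished upper order ideal.  Bi-leveled trees are the labelled
trees satisfying `isBL` below. -/
inductive LTree : Type
  | leaf : LTree
  | node : LTree → Bool → LTree → LTree
  deriving DecidableEq, Repr

namespace LTree

instance : Inhabited LTree := ⟨leaf⟩

def size : LTree → ℕ
  | leaf => 0
  | node l _ r => l.size + r.size + 1

def nleaves : LTree → ℕ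
  | leaf => 1
  | node l _ r => l.nleaves + r.nleaves

/-- Forget the labels. -/
def forget : LTree → PBTree
  | leaf => PBTree.leaf
  | node l _ r => PBTree.node l.forget r.forget

/-- All labels are `false`. -/
def allFalse : LTree → Bool
  | leaf => true
  | node l b r => !b && l.allFalse && r.allFalse

/-- The set of `true` nodes forms an upper order ideal of the node poset
(each node is below its parent; the root is maximal). -/
def isUpperIdeal : LTree → Bool
  | leaf => true
  | node l b r => if b then l.isUpperIdeal && r.isUpperIdeal else l.allFalse && r.allFalse

/-- The leftmost node is labelled `true` and is a minimal element of the ideal,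
i.e. its descendants are all labelled `false`.  (Vacuously true for the empty tree.) -/
def leftmostMin : LTree → Bool
  | leaf => true
  | node leaf b r => b && r.allFalse
  | node l _ _ => leftmostMin l

/-- `b` is a bi-leveled tree: the `true` nodes form an upper order ideal containing
the leftmost node as a minimal element. -/
def isBL (b : LTree) : Prop := b.isUpperIdeal = true ∧ b.leftmostMin = true

end LTree

/-- The number of bi-leveled trees with `n` (internal) nodes. -/
noncomputable def blCount (n : ℕ) : ℕ :=
  {b : LTree | LTree.isBL b ∧ b.size = n}.ncard

namespace LTree

/-- In-order (left-to-right) list of the node labels. -/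
def labelsList : LTree → List Bool
  | leaf => []
  | node l b r => labelsList l ++ b :: labelsList r

/-- The order ideal of a bi-leveled tree, as the set of (0-indexed, left-to-right)
positions of its `true` nodes. -/
def idealSet (b : LTree) : Finset ℕ :=
  (Finset.range b.size).filter fun i => (labelsList b).getD i false = true

end LTree

namespace PBTree

/-- One step of the Tamari (rotation) order: a child node is moved from the left to the
right branch across its parent. -/
inductive Rot : PBTree → PBTree → Prop
  | here (a b c : PBTree) : Rot (node (node a b) c) (node a (node b c))
  | left {l l' : PBTree} (r : PBTree) : Rot l l' → Rot (node l r) (node l' r)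
  | right (l : PBTree) {r r' : PBTree} : Rot r r' → Rot (node l r) (node l r')

/-- The Tamari order on planar binary trees. -/
def tamariLe : PBTree → PBTree → Prop := Relation.ReflTransGen Rot

end PBTree

/-- The partial order on bi-leveled trees: `b ≤ c` iff the underlying trees satisfy
`φ(b) ≤ φ(c)` in the Tamari order and the ideal of `c` is contained in that of `b`. -/
def blLe (b c : LTree) : Prop :=
  PBTree.tamariLe b.forget c.forget ∧ c.idealSet ⊆ b.idealSet

theorem List.foldr_max_mem : ∀ w : List ℕ, w ≠ [] → w.foldr max 0 ∈ w := by
  intro w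
  induction w with
  | nil => simp
  | cons a t ih =>
    intro _
    by_cases ht : t = []
    · subst ht; simp
    · rcases max_choice a (t.foldr max 0) with h | h <;>
        simp [List.foldr_cons, h, ih ht]

/-- The Loday–Ronco/Tonks map `τ` on words with distinct letters: recursively, the root
is placed at the position of the largest letter. -/
def tauL (w : List ℕ) : PBTree :=
  if h : w = [] then PBTree.leaf
  else
    let j := w.idxOf (w.foldr max 0)
    PBTree.node (tauL (w.take j)) (tauL (w.drop (j + 1)))
termination_by w.length
decreasing_by
  · have hj : w.idxOf (w.foldr max 0) < w.length :=
      List.idxOf_lt_length_iff.2 (List.foldr_max_mem w h)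
    simp only [List.length_take, List.foldr_attach]; omega
  · have : 0 < w.length := List.length_pos_iff.2 h
    simp only [List.length_drop]; omega

/-- The labelled version of `τ`: a node is labelled `true` iff its value (the maximum of
its subword) is at least the threshold `c`. -/
def tauB (c : ℕ) (w : List ℕ) : LTree :=
  if h : w = [] then LTree.leaf
  else
    let m := w.foldr max 0
    let j := w.idxOf m
    LTree.node (tauB c (w.take j)) (decide (c ≤ m)) (tauB c (w.drop (j + 1)))
termination_by w.length
decreasing_by
  · have hj : w.idxOf (w.foldr max 0) < w.length :=
      List.idxOf_lt_length_iff.2 (List.foldr_max_mem w h)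
    simp only [List.length_take, List.foldr_attach]; omega
  · have : 0 < w.length := List.length_pos_iff.2 h
    simp only [List.length_drop]; omega

/-- The map `β` on words: `β(w) = (τ(w); T(w))` with `T(w) = {i : w i ≥ w 1}`, encoded by
labelling a node `true` iff its value is at least the first letter of `w`. -/
def betaL (w : List ℕ) : LTree := tauB w.headI w

/-- The word (one-line notation, values in `1..n`) of a permutation of `Fin n`. -/
def permWord {n : ℕ} (w : Equiv.Perm (Fin n)) : List ℕ :=
  List.ofFn fun i => (w i : ℕ) + 1

def tauP {n : ℕ} (w : Equiv.Perm (Fin n)) : PBTree := tauL (permWord w)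

def betaP {n : ℕ} (w : Equiv.Perm (Fin n)) : LTree := betaL (permWord w)

/-- The (value) inversion set of a permutation: pairs `a < b` such that `b` occurs
before `a` in one-line notation. -/
def invSet {n : ℕ} (w : Equiv.Perm (Fin n)) : Finset (Fin n × Fin n) :=
  Finset.univ.filter fun p => p.1 < p.2 ∧ w.symm p.2 < w.symm p.1

/-- The left weak order on the symmetric group: containment of inversion sets. -/
def weakLe {n : ℕ} (u v : Equiv.Perm (Fin n)) : Prop := invSet u ⊆ invSet v

open scoped TensorProduct

namespace PBTree

/-- All splittings of a planar binary tree along one leaf. -/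
def psplits : PBTree → Finset (PBTree × PBTree)
  | leaf => {(leaf, leaf)}
  | node l r =>
      ((psplits l).image fun p => (p.1, node p.2 r)) ∪
        ((psplits r).image fun p => (node l p.1, p.2))

/-- All splittings of a planar binary tree along a multiset of `m` leaves, as ordered
forests of `m+1` trees. -/
def msplits : ℕ → PBTree → Finset (List PBTree)
  | 0, t => {[t]}
  | m + 1, t => (psplits t).biUnion fun p => (msplits m p.2).image fun L => p.1 :: L

/-- Graft an ordered forest onto the leaves of a tree. -/
def graft : List PBTree → PBTree → PBTree
  | L, leaf => L.headI
  | L, node l r => node (graft (L.take l.nleaves) l) (graft (L.drop l.nleaves) r)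

end PBTree

namespace LTree

/-- All splittings of a labelled tree along one leaf; the pieces keep their labels. -/
def lsplits : LTree → Finset (LTree × LTree)
  | leaf => {(leaf, leaf)}
  | node l b r =>
      ((lsplits l).image fun p => (p.1, node p.2 b r)) ∪
        ((lsplits r).image fun p => (node l b p.1, p.2))

/-- All splittings of a labelled tree along a multiset of `m` leaves. -/
def msplits : ℕ → LTree → Finset (List LTree)
  | 0, t => {[t]}
  | m + 1, t => (lsplits t).biUnion fun p => (msplits m p.2).image fun L => p.1 :: L

/-- Graft an ordered forest of labelled trees onto the leaves of a labelled tree,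
keeping all labels. -/
def graftL : List LTree → LTree → LTree
  | L, leaf => L.headI
  | L, node l b r => node (graftL (L.take l.nleaves) l) b (graftL (L.drop l.nleaves) r)

/-- Set all labels to `false`. -/
def setFalse : LTree → LTree
  | leaf => leaf
  | node l _ r => node l.setFalse false r.setFalse

/-- Set all labels to `true`. -/
def setTrue : LTree → LTree
  | leaf => leaf
  | node l _ r => node l.setTrue true r.setTrue

end LTree

/-- Label all nodes of a planar tree `true`. -/
def PBTree.trueLab : PBTree → LTree
  | leaf => LTree.leaf
  | node l r => LTree.node l.trueLab true r.trueLab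

/-- Label all nodes of a planar tree `false`. -/
def PBTree.falseLab : PBTree → LTree
  | leaf => LTree.leaf
  | node l r => LTree.node l.falseLab false r.falseLab

/-- Grafting of bi-leveled trees for the product of `MSym`:
`(b_0,…,b_m)/c` carries the order ideal `T(c)` if `b_0` is empty, and
`T(b) ∪ {nodes of c}` otherwise. -/
def mgraft (L : List LTree) (c : LTree) : LTree :=
  if L.headI = LTree.leaf then LTree.graftL (L.map LTree.setFalse) c
  else LTree.graftL L c.setTrue

/-- The underlying vector space of `MSym`: the free `ℚ`-vector space on labelled trees
(`MSym` proper is spanned by the bi-leveled trees, i.e. those satisfying `isBL`). -/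
abbrev MSym : Type := LTree →₀ ℚ

/-- The underlying vector space of the Loday–Ronco Hopf algebra `YSym`. -/
abbrev YSym : Type := PBTree →₀ ℚ

/-- The underlying vector space of the Malvenuto–Reutenauer Hopf algebra `SSym`
(`SSym` proper is spanned by the permutation words). -/
abbrev SSym : Type := List ℕ →₀ ℚ

/-- `w` is (the one-line notation of) a permutation of `{1,…,n}`. -/
def IsPermList (w : List ℕ) : Prop := w.Perm (List.range' 1 w.length)

/-- Standardization of a word with distinct letters. -/
def stdL (w : List ℕ) : List ℕ := w.map fun a => (w.filter (· < a)).length + 1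

/-- All shuffles of two words. -/
def shuffles : List ℕ → List ℕ → List (List ℕ)
  | [], v => [v]
  | u, [] => [u]
  | a :: u, b :: v =>
      ((shuffles u (b :: v)).map (a :: ·)) ++ ((shuffles (a :: u) v).map (b :: ·))
termination_by u v => u.length + v.length

/-- The product of the Malvenuto–Reutenauer algebra `SSym` in the fundamental basis:
`F_u · F_v` is the sum of `F_w` over shuffles `w` of `u` with the shifted word of `v`. -/
noncomputable def mulS : SSym →ₗ[ℚ] SSym →ₗ[ℚ] SSym :=
  Finsupp.lift (SSym →ₗ[ℚ] SSym) ℚ (List ℕ) fun u =>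
    Finsupp.lift SSym ℚ (List ℕ) fun v =>
      ((shuffles u (v.map (· + u.length))).map fun w => Finsupp.single w (1 : ℚ)).sum

/-- The product of `MSym` in the fundamental basis:
`F_b · F_c = ∑_{b → (b_0,…,b_m)} F_{(b_0,…,b_m)/c}` where `m` is the number of nodes
of `c`. -/
noncomputable def mulM : MSym →ₗ[ℚ] MSym →ₗ[ℚ] MSym :=
  Finsupp.lift (MSym →ₗ[ℚ] MSym) ℚ LTree fun b =>
    Finsupp.lift MSym ℚ LTree fun c =>
      ∑ L ∈ LTree.msplits c.size b, Finsupp.single (mgraft L c) (1 : ℚ)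

/-- The product of the Loday–Ronco algebra `YSym` in the fundamental basis. -/
noncomputable def mulY : YSym →ₗ[ℚ] YSym →ₗ[ℚ] YSym :=
  Finsupp.lift (YSym →ₗ[ℚ] YSym) ℚ PBTree fun t =>
    Finsupp.lift YSym ℚ PBTree fun s =>
      ∑ L ∈ PBTree.msplits s.size t, Finsupp.single (PBTree.graft L s) (1 : ℚ)

/-- The map `β̄ : SSym → MSym`, `F_w ↦ F_{β(w)}`. -/
noncomputable def betaBar : SSym →ₗ[ℚ] MSym := Finsupp.lmapDomain ℚ ℚ betaL

/-- The map `τ̄ : SSym → YSym`, `F_w ↦ F_{τ(w)}`. -/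
noncomputable def tauBar : SSym →ₗ[ℚ] YSym := Finsupp.lmapDomain ℚ ℚ tauL

/-- The map `φ̄ : MSym → YSym`, `F_b ↦ F_{φ(b)}`. -/
noncomputable def phiBar : MSym →ₗ[ℚ] YSym := Finsupp.lmapDomain ℚ ℚ LTree.forget

/-- The coproduct of `SSym`: `Δ F_w = ∑_{w → (w_0,w_1)} F_{w_0} ⊗ F_{w_1}`, the pieces
of a splitting being standardized to genuine permutations. -/
noncomputable def deltaS : SSym →ₗ[ℚ] SSym ⊗[ℚ] SSym :=
  Finsupp.lift (SSym ⊗[ℚ] SSym) ℚ (List ℕ) fun w =>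
    ∑ i ∈ Finset.range (w.length + 1),
      Finsupp.single (stdL (w.take i)) (1 : ℚ) ⊗ₜ[ℚ] Finsupp.single (stdL (w.drop i)) (1 : ℚ)

/-- The coproduct of `YSym`: `Δ F_t = ∑_{t → (t_0,t_1)} F_{t_0} ⊗ F_{t_1}`. -/
noncomputable def deltaY : YSym →ₗ[ℚ] YSym ⊗[ℚ] YSym :=
  Finsupp.lift (YSym ⊗[ℚ] YSym) ℚ PBTree fun t =>
    ∑ p ∈ PBTree.psplits t, Finsupp.single p.1 (1 : ℚ) ⊗ₜ[ℚ] Finsupp.single p.2 (1 : ℚ)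

/-- The counit of `YSym`. -/
noncomputable def epsY : YSym →ₗ[ℚ] ℚ :=
  Finsupp.lift ℚ ℚ PBTree fun t => if t = PBTree.leaf then (1 : ℚ) else 0

/-- The coaction `ρ : MSym → MSym ⊗ YSym`,
`ρ(F_b) = ∑_{b → (b_0,b_1)} F_{b_0} ⊗ F_{φ(b_1)}`. -/
noncomputable def rhoM : MSym →ₗ[ℚ] MSym ⊗[ℚ] YSym :=
  Finsupp.lift (MSym ⊗[ℚ] YSym) ℚ LTree fun b =>
    ∑ p ∈ LTree.lsplits b, Finsupp.single p.1 (1 : ℚ) ⊗ₜ[ℚ] Finsupp.single p.2.forget (1 : ℚ)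

/-- `b\s`: graft the planar tree `s` onto the rightmost leaf of the labelled tree `b`,
keeping the order ideal of `b` (the new nodes are not in the ideal). -/
def graftRight : LTree → PBTree → LTree
  | LTree.leaf, s => s.falseLab
  | LTree.node l b r, s => LTree.node l b (graftRight r s)

/-- The rightmost node of the tree is labelled `true`. -/
def rightmostTrue : LTree → Bool
  | .leaf => false
  | .node _ b .leaf => b
  | .node _ _ r => rightmostTrue r

/-- An indecomposable bi-leveled tree: its order ideal contains the rightmost node. -/
def indecBL (b : LTree) : Prop := b.isBL ∧ rightmostTrue b = true

/-- `β(Max(t))`: the bi-leveled tree on `t` whose order ideal consists exactly of the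
nodes along the leftmost branch of `t`. -/
def maxBL : PBTree → LTree
  | PBTree.leaf => LTree.leaf
  | PBTree.node l r => LTree.node (maxBL l) true r.falseLab

/-! Grafting onto the rightmost leaf adds only `false` nodes, hanging below the rightmost
leaf, so for `b ≠ leaf` the tree `b\s` is bi-leveled iff `b` is. In an upper ideal the `true`
nodes of the right spine form an initial segment of it, and cutting the spine just below the
last of them (`splitRight`) inverts `(b, s) ↦ b\s`: it is a right inverse on upper ideals and a
left inverse on trees whose rightmost node is `true`. The cut leaves a nonempty `b` for a
nonempty bi-leveled tree, which cannot be all `false` because its leftmost node is `true`. -/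

namespace LTree

theorem isUpperIdeal_of_allFalse : ∀ {t : LTree}, t.allFalse = true → t.isUpperIdeal = true
  | .leaf, _ => rfl
  | .node l b r, h => by
    simp only [allFalse, Bool.and_eq_true, Bool.not_eq_true'] at h
    obtain ⟨⟨rfl, hl⟩, hr⟩ := h
    simp [isUpperIdeal, hl, hr]

theorem falseLab_forget_of_allFalse : ∀ {t : LTree}, t.allFalse = true → t.forget.falseLab = t
  | .leaf, _ => rfl
  | .node l b r, h => by
    simp only [allFalse, Bool.and_eq_true, Bool.not_eq_true'] at h
    obtain ⟨⟨rfl, hl⟩, hr⟩ := h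
    simp [forget, PBTree.falseLab, falseLab_forget_of_allFalse hl, falseLab_forget_of_allFalse hr]

end LTree

namespace PBTree

@[simp]
theorem allFalse_falseLab (s : PBTree) : s.falseLab.allFalse = true := by
  induction s with
  | leaf => rfl
  | node l r ihl ihr => simp [falseLab, LTree.allFalse, ihl, ihr]

@[simp]
theorem isUpperIdeal_falseLab (s : PBTree) : s.falseLab.isUpperIdeal = true :=
  LTree.isUpperIdeal_of_allFalse (allFalse_falseLab s)

@[simp]
theorem forget_falseLab (s : PBTree) : s.falseLab.forget = s := by
  induction s with
  | leaf => rfl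
  | node l r ihl ihr => simp [falseLab, LTree.forget, ihl, ihr]

@[simp]
theorem size_falseLab (s : PBTree) : s.falseLab.size = s.size := by
  induction s with
  | leaf => rfl
  | node l r ihl ihr => simp [falseLab, LTree.size, size, ihl, ihr]

theorem eq_leaf_of_leftmostMin_falseLab : ∀ {s : PBTree}, s.falseLab.leftmostMin = true → s = leaf
  | .leaf, _ => rfl
  | .node .leaf _, h => by simp [falseLab, LTree.leftmostMin] at h
  | .node (.node a b) _, h => nomatch eq_leaf_of_leftmostMin_falseLab (s := .node a b) h

end PBTree

open LTree

theorem ne_leaf_of_rightmostTrue {b : LTree} (h : rightmostTrue b = true) : b ≠ .leaf := by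
  rintro rfl
  simp [rightmostTrue] at h

theorem rightmostTrue_node_of_ne_leaf {r : LTree} (hr : r ≠ .leaf) (l : LTree) (x : Bool) :
    rightmostTrue (.node l x r) = rightmostTrue r := by
  cases r with
  | leaf => exact absurd rfl hr
  | node => rfl

theorem graftRight_ne_leaf {b : LTree} (hb : b ≠ .leaf) (s : PBTree) : graftRight b s ≠ .leaf := by
  cases b with
  | leaf => exact absurd rfl hb
  | node => simp [graftRight]

theorem size_graftRight (b : LTree) (s : PBTree) :
    (graftRight b s).size = b.size + s.size := by
  induction b with
  | leaf => simp [graftRight, size]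
  | node l x r _ ih => simp only [graftRight, size, ih]; omega

theorem allFalse_graftRight (b : LTree) (s : PBTree) :
    (graftRight b s).allFalse = b.allFalse := by
  induction b with
  | leaf => simp [graftRight, allFalse]
  | node l x r _ ih => simp [graftRight, allFalse, ih]

theorem isUpperIdeal_graftRight (b : LTree) (s : PBTree) :
    (graftRight b s).isUpperIdeal = b.isUpperIdeal := by
  induction b with
  | leaf => simp [graftRight, isUpperIdeal]
  | node l x r _ ih => simp [graftRight, isUpperIdeal, allFalse_graftRight, ih]

theorem leftmostMin_graftRight :
    ∀ {b : LTree}, b ≠ .leaf → ∀ s : PBTree, (graftRight b s).leftmostMin = b.leftmostMin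
  | .leaf, hb, _ => absurd rfl hb
  | .node .leaf x r, _, s => by simp [graftRight, leftmostMin, allFalse_graftRight]
  | .node (.node _ _ _) _ _, _, _ => rfl

theorem isBL_graftRight_iff {b : LTree} (hb : b ≠ .leaf) (s : PBTree) :
    (graftRight b s).isBL ↔ b.isBL := by
  rw [isBL, isBL, isUpperIdeal_graftRight, leftmostMin_graftRight hb]

def splitRight : LTree → LTree × PBTree
  | .leaf => (.leaf, .leaf)
  | .node l b r =>
    let p := splitRight r
    if b = false ∧ p.1 = .leaf then (.leaf, .node l.forget p.2) else (.node l b p.1, p.2)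

theorem splitRight_falseLab (s : PBTree) : splitRight s.falseLab = (.leaf, s) := by
  induction s with
  | leaf => rfl
  | node l r _ ih => simp [PBTree.falseLab, splitRight, ih]

theorem splitRight_graftRight :
    ∀ {b : LTree}, rightmostTrue b = true → ∀ s : PBTree, splitRight (graftRight b s) = (b, s)
  | .leaf, hb, _ => by simp [rightmostTrue] at hb
  | .node l x .leaf, hb, s => by
    simp only [rightmostTrue] at hb
    simp [graftRight, splitRight, splitRight_falseLab, hb]
  | .node l x (.node a y c), hb, s => by
    simp only [rightmostTrue] at hb
    rw [graftRight, splitRight, splitRight_graftRight hb s]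
    simp

theorem graftRight_splitRight :
    ∀ {c : LTree}, c.isUpperIdeal = true → graftRight (splitRight c).1 (splitRight c).2 = c
  | .leaf, _ => rfl
  | .node l x r, hc => by
    have hr : r.isUpperIdeal = true := by
      cases x <;> simp_all [isUpperIdeal, isUpperIdeal_of_allFalse]
    have ih := graftRight_splitRight hr
    simp only [splitRight]
    split_ifs with h
    · obtain ⟨rfl, hleaf⟩ := h
      have hl : l.allFalse = true := by simp_all [isUpperIdeal]
      rw [hleaf, graftRight] at ih
      rw [graftRight, PBTree.falseLab, falseLab_forget_of_allFalse hl, ih]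
    · rw [graftRight, ih]

theorem rightmostTrue_splitRight_fst :
    ∀ {c : LTree}, (splitRight c).1 ≠ .leaf → rightmostTrue (splitRight c).1 = true
  | .leaf, h => absurd rfl h
  | .node l x r, h => by
    simp only [splitRight] at h ⊢
    split_ifs at h ⊢ with hx
    · exact absurd rfl h
    · by_cases hr : (splitRight r).1 = .leaf
      · simp_all [rightmostTrue]
      · rw [rightmostTrue_node_of_ne_leaf hr]
        exact rightmostTrue_splitRight_fst hr

/-- Every nonempty bi-leveled tree `c` decomposes uniquely as
`c = b\s` with `b` an indecomposable bi-leveled tree and `s` a planar binary tree;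
conversely each such `b\s` is a nonempty bi-leveled tree, and the bijection
`M₊ ≅ B × Y` is graded: `|c| = |b| + |s|`. -/
theorem unique_indecomposable_decomposition :
    (∀ (b : LTree) (s : PBTree), indecBL b →
      (graftRight b s).isBL ∧ graftRight b s ≠ LTree.leaf ∧
        (graftRight b s).size = b.size + s.size) ∧
    (∀ c : LTree, c.isBL → c ≠ LTree.leaf →
      ∃! p : LTree × PBTree, indecBL p.1 ∧ graftRight p.1 p.2 = c) := by
  refine ⟨fun b s ⟨hb, hrt⟩ => ?_, fun c hc hne => ?_⟩
  · have hne := ne_leaf_of_rightmostTrue hrt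
    exact ⟨(isBL_graftRight_iff hne s).2 hb, graftRight_ne_leaf hne s, size_graftRight b s⟩
  · have hsplit := graftRight_splitRight hc.1
    have hfst : (splitRight c).1 ≠ .leaf := by
      intro hleaf
      rw [hleaf] at hsplit
      have hs := PBTree.eq_leaf_of_leftmostMin_falseLab (hsplit ▸ hc.2)
      exact hne (by rw [← hsplit, hs]; rfl)
    refine ⟨splitRight c, ⟨⟨?_, rightmostTrue_splitRight_fst hfst⟩, hsplit⟩, ?_⟩
    · exact (isBL_graftRight_iff hfst _).1 (hsplit ▸ hc)
    · rintro ⟨b, s⟩ ⟨⟨_, hrt⟩, rfl⟩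
      exact (splitRight_graftRight hrt s).symm
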